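/- arXiv:1911.03679 — 4 statements merged into one kernel-verified Lean document; each statement's English description precedes it below -/
import Mathlib

section
/- For every sentence φ of the guarded fragment with constants c₁,…,c_k, the sentence φ' = ∃c⃗ (P(c⃗) ∧ φ[R*(c⃗, x⃗)/R(x⃗)]), obtained by replacing each m-ary relation symbol R by a fresh (k+m)-ary symbol R*, adding a fresh k-ary predicate P, and quantifying the constants as variables, is a constant-free guarded fragment sentence that is satisfiable if and only if φ is satisfiable. -/
/-! Every atom of `star φ` lists the constants `c⃗` first, so once the constants become variables
each guard `R*(c⃗, x⃗)` still covers every free variable of what it guards, and guardedness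
survives. Semantically, a model of `φ` with constants `cI` gives a model of `φ'` by reading
`R*(c⃗, x⃗)` as `R(x⃗)`, `P` as true and `cI` as the witness of the outer block; conversely, a
witness `w` of the outer block turns a model of `φ'` into one of `φ` with `R(x⃗) := R*(w, x⃗)`
and constants `w`. -/

namespace Stmt9

/-- First-order formulas over relation symbols `R` (arities `ar`) and
constants `C`, with free variables among `Fin n`; `ex k φ` and `all k φ`
bind the last `k` variables of `φ`. -/
inductive Fml (R C : Type) (ar : R → ℕ) : ℕ → Type where
  | tru {n : ℕ} : Fml R C ar n
  | fls {n : ℕ} : Fml R C ar n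
  | atom {n : ℕ} (r : R) (args : Fin (ar r) → (Fin n ⊕ C)) : Fml R C ar n
  | eq {n : ℕ} (t₁ t₂ : Fin n ⊕ C) : Fml R C ar n
  | not {n : ℕ} (φ : Fml R C ar n) : Fml R C ar n
  | and {n : ℕ} (φ ψ : Fml R C ar n) : Fml R C ar n
  | or {n : ℕ} (φ ψ : Fml R C ar n) : Fml R C ar n
  | ex {n : ℕ} (k : ℕ) (φ : Fml R C ar (n + k)) : Fml R C ar n
  | all {n : ℕ} (k : ℕ) (φ : Fml R C ar (n + k)) : Fml R C ar n

variable {R C : Type} {ar : R → ℕ}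

/-- Tarskian satisfaction. -/
def Fml.Realize {M : Type} (interp : ∀ r : R, (Fin (ar r) → M) → Prop)
    (cI : C → M) : {n : ℕ} → Fml R C ar n → (Fin n → M) → Prop
  | _, .tru, _ => True
  | _, .fls, _ => False
  | _, .atom r args, a => interp r fun i => (args i).elim a cI
  | _, .eq t₁ t₂, a => t₁.elim a cI = t₂.elim a cI
  | _, .not φ, a => ¬ φ.Realize interp cI a
  | _, .and φ ψ, a => φ.Realize interp cI a ∧ ψ.Realize interp cI a
  | _, .or φ ψ, a => φ.Realize interp cI a ∨ ψ.Realize interp cI a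
  | _, .ex k φ, a => ∃ w : Fin k → M, φ.Realize interp cI (Fin.append a w)
  | _, .all k φ, a => ∀ w : Fin k → M, φ.Realize interp cI (Fin.append a w)

/-- Free variables of a formula. -/
def Fml.freeVars : {n : ℕ} → Fml R C ar n → Set (Fin n)
  | _, .tru => ∅
  | _, .fls => ∅
  | _, .atom _ args => {v | ∃ i, args i = Sum.inl v}
  | _, .eq t₁ t₂ => {v | t₁ = Sum.inl v ∨ t₂ = Sum.inl v}
  | _, .not φ => φ.freeVars
  | _, .and φ ψ => φ.freeVars ∪ ψ.freeVars
  | _, .or φ ψ => φ.freeVars ∪ ψ.freeVars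
  | _, .ex k φ => {v | Fin.castAdd k v ∈ φ.freeVars}
  | _, .all k φ => {v | Fin.castAdd k v ∈ φ.freeVars}

/-- The guarded fragment: atomic formulas, Boolean combinations, and guarded
quantification `∃x⃗ (G ∧ ψ)` and `∀x⃗ (G → ψ)` where the atom `G` contains all
free variables of `ψ`. -/
inductive IsGF : {n : ℕ} → Fml R C ar n → Prop where
  | tru {n : ℕ} : IsGF (Fml.tru (n := n))
  | fls {n : ℕ} : IsGF (Fml.fls (n := n))
  | atom {n : ℕ} (r : R) (args : Fin (ar r) → (Fin n ⊕ C)) : IsGF (Fml.atom r args)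
  | eq {n : ℕ} (t₁ t₂ : Fin n ⊕ C) : IsGF (Fml.eq t₁ t₂)
  | not {n : ℕ} {φ : Fml R C ar n} : IsGF φ → IsGF φ.not
  | and {n : ℕ} {φ ψ : Fml R C ar n} : IsGF φ → IsGF ψ → IsGF (φ.and ψ)
  | or {n : ℕ} {φ ψ : Fml R C ar n} : IsGF φ → IsGF ψ → IsGF (φ.or ψ)
  | ex {n k : ℕ} (r : R) (gargs : Fin (ar r) → (Fin (n + k) ⊕ C))
      {φ : Fml R C ar (n + k)} (hφ : IsGF φ)
      (hg : ∀ v ∈ φ.freeVars, ∃ i, gargs i = Sum.inl v) :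
      IsGF (Fml.ex k ((Fml.atom r gargs).and φ))
  | all {n k : ℕ} (r : R) (gargs : Fin (ar r) → (Fin (n + k) ⊕ C))
      {φ : Fml R C ar (n + k)} (hφ : IsGF φ)
      (hg : ∀ v ∈ φ.freeVars, ∃ i, gargs i = Sum.inl v) :
      IsGF (Fml.all k ((Fml.atom r gargs).not.or φ))

/-- The arities of the extended schema: the fresh guard predicate `P` (coded
by `none`) has arity `c`, and `R*` (coded by `some R`) has arity `c + ar R`. -/
def starAr (ar : R → ℕ) (c : ℕ) : Option R → ℕ
  | none => c
  | some r => c + ar r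

/-- Replace every atom `R(t⃗)` by `R*(c⃗, t⃗)`, the constants still being
constants. -/
def star {c : ℕ} : {n : ℕ} → Fml R (Fin c) ar n → Fml (Option R) (Fin c) (starAr ar c) n
  | _, .tru => .tru
  | _, .fls => .fls
  | _, .atom r args =>
      .atom (some r) (Fin.addCases (fun j : Fin c => Sum.inr j) args)
  | _, .eq t₁ t₂ => .eq t₁ t₂
  | _, .not φ => .not (star φ)
  | _, .and φ ψ => .and (star φ) (star ψ)
  | _, .or φ ψ => .or (star φ) (star ψ)
  | _, .ex k φ => .ex k (star φ)
  | _, .all k φ => .all k (star φ)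

/-- Relabel the variables and constants of a formula along a map on
arguments; under a binder of `k` fresh variables the map is extended to keep
the bound variables. -/
def extendMap {C₁ C₂ : Type} {n m : ℕ} (f : (Fin n ⊕ C₁) → (Fin m ⊕ C₂)) (k : ℕ) :
    (Fin (n + k) ⊕ C₁) → (Fin (m + k) ⊕ C₂)
  | .inl v => Fin.addCases (motive := fun _ => Fin (m + k) ⊕ C₂)
      (fun i : Fin n => (f (Sum.inl i)).map (Fin.castAdd k) id)
      (fun j : Fin k => Sum.inl (Fin.natAdd m j)) v
  | .inr c => (f (Sum.inr c)).map (Fin.castAdd k) id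

def relabel {C₁ C₂ : Type} :
    {n m : ℕ} → ((Fin n ⊕ C₁) → (Fin m ⊕ C₂)) → Fml R C₁ ar n → Fml R C₂ ar m
  | _, _, _, .tru => .tru
  | _, _, _, .fls => .fls
  | _, _, f, .atom r args => .atom r (f ∘ args)
  | _, _, f, .eq t₁ t₂ => .eq (f t₁) (f t₂)
  | _, _, f, .not φ => .not (relabel f φ)
  | _, _, f, .and φ ψ => .and (relabel f φ) (relabel f ψ)
  | _, _, f, .or φ ψ => .or (relabel f φ) (relabel f ψ)
  | _, _, f, .ex k φ => .ex k (relabel (extendMap f k) φ)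
  | _, _, f, .all k φ => .all k (relabel (extendMap f k) φ)

/-- The constant-free sentence `φ' = ∃c⃗ (P(c⃗) ∧ φ[R*(c⃗,x⃗)/R(x⃗)])`: the `c`
constants become the variables bound by the outer existential block, guarded
by the fresh predicate `P`. -/
def elimConsts {c : ℕ} (φ : Fml R (Fin c) ar 0) : Fml (Option R) Empty (starAr ar c) 0 :=
  Fml.ex c
    ((Fml.atom (none : Option R)
        (fun j : Fin c => (Sum.inl (Fin.natAdd 0 j) : Fin (0 + c) ⊕ Empty))).and
      (relabel
        (fun t => match t with
          | Sum.inl v => v.elim0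
          | Sum.inr j => Sum.inl (Fin.natAdd 0 j))
        (star φ)))

theorem freeVars_star {c n : ℕ} (ψ : Fml R (Fin c) ar n) : (star ψ).freeVars = ψ.freeVars := by
  induction ψ with
  | atom r args =>
    ext v
    simp only [star, Fml.freeVars, Set.mem_ofPred_eq]
    constructor
    · rintro ⟨i, hi⟩
      induction i using Fin.addCases with
      | left j => simp at hi
      | right i => exact ⟨i, by simpa using hi⟩
    · rintro ⟨i, hi⟩
      exact ⟨Fin.natAdd c i, by simpa using hi⟩
  | _ => simp_all [star, Fml.freeVars]

section Relabel

variable {C₁ C₂ : Type} {n m : ℕ}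

theorem extendMap_eq_inl_castAdd (f : Fin n ⊕ C₁ → Fin m ⊕ C₂) {k : ℕ}
    {t : Fin (n + k) ⊕ C₁} {v : Fin m} (h : extendMap f k t = Sum.inl (Fin.castAdd k v)) :
    ∃ t', f t' = Sum.inl v ∧ t = t'.map (Fin.castAdd k) id := by
  rcases t with w | j
  · induction w using Fin.addCases with
    | left i =>
      refine ⟨Sum.inl i, ?_, rfl⟩
      cases hf : f (Sum.inl i) <;> simp_all [extendMap]
    | right j =>
      simp only [extendMap, Fin.addCases_right, Sum.inl.injEq, Fin.ext_iff, Fin.val_natAdd,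
        Fin.val_castAdd] at h
      omega
  · refine ⟨Sum.inr j, ?_, rfl⟩
    cases hf : f (Sum.inr j) <;> simp_all [extendMap]

theorem exists_of_mem_freeVars_relabel (ψ : Fml R C₁ ar n) (f : Fin n ⊕ C₁ → Fin m ⊕ C₂)
    {v : Fin m} (hv : v ∈ (relabel f ψ).freeVars) :
    ∃ t, f t = Sum.inl v ∧ ∀ w, t = Sum.inl w → w ∈ ψ.freeVars := by
  induction ψ generalizing m with
  | tru | fls => exact hv.elim
  | atom r args =>
    obtain ⟨i, hi⟩ := hv
    exact ⟨args i, hi, fun w hw => ⟨i, hw⟩⟩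
  | eq t₁ t₂ =>
    rcases hv with hv | hv
    · exact ⟨t₁, hv, fun w hw => Or.inl hw⟩
    · exact ⟨t₂, hv, fun w hw => Or.inr hw⟩
  | not φ ih => exact ih f hv
  | and φ ψ ih₁ ih₂ | or φ ψ ih₁ ih₂ =>
    rcases hv with hv | hv
    · obtain ⟨t, hft, ht⟩ := ih₁ f hv
      exact ⟨t, hft, fun w hw => Or.inl (ht w hw)⟩
    · obtain ⟨t, hft, ht⟩ := ih₂ f hv
      exact ⟨t, hft, fun w hw => Or.inr (ht w hw)⟩
  | ex k φ ih | all k φ ih =>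
    obtain ⟨t, hft, ht⟩ := ih (extendMap f k) hv
    obtain ⟨t', hft', rfl⟩ := extendMap_eq_inl_castAdd f hft
    exact ⟨t', hft', fun w hw => ht _ (by simp [hw])⟩

theorem elim_extendMap {M : Type} (f : Fin n ⊕ C₁ → Fin m ⊕ C₂) {a : Fin n → M} {b : Fin m → M}
    {cI₁ : C₁ → M} {cI₂ : C₂ → M} (hf : ∀ t, (f t).elim b cI₂ = t.elim a cI₁)
    {k : ℕ} (w : Fin k → M) (t : Fin (n + k) ⊕ C₁) :
    (extendMap f k t).elim (Fin.append b w) cI₂ = t.elim (Fin.append a w) cI₁ := by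
  have lift : ∀ t' : Fin m ⊕ C₂, (t'.map (Fin.castAdd k) id).elim (Fin.append b w) cI₂ = (t'.elim b cI₂) := by
    rintro (_ | _) <;> simp
  rcases t with v | j
  · induction v using Fin.addCases with
    | left i => simpa [extendMap, lift] using hf (Sum.inl i)
    | right j => simp [extendMap]
  · simpa [extendMap, lift] using hf (Sum.inr j)

theorem realize_relabel {M : Type} (I : ∀ r : R, (Fin (ar r) → M) → Prop) {cI₁ : C₁ → M}
    {cI₂ : C₂ → M} (ψ : Fml R C₁ ar n) (f : Fin n ⊕ C₁ → Fin m ⊕ C₂) {a : Fin n → M}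
    {b : Fin m → M} (hf : ∀ t, (f t).elim b cI₂ = t.elim a cI₁) :
    (relabel f ψ).Realize I cI₂ b ↔ ψ.Realize I cI₁ a := by
  induction ψ generalizing m with
  | tru | fls => rfl
  | atom r args => simp only [relabel, Fml.Realize, Function.comp_apply, hf]
  | eq t₁ t₂ => simp only [relabel, Fml.Realize, hf]
  | not φ ih => exact not_congr (ih f hf)
  | and φ ψ ih₁ ih₂ => exact and_congr (ih₁ f hf) (ih₂ f hf)
  | or φ ψ ih₁ ih₂ => exact or_congr (ih₁ f hf) (ih₂ f hf)
  | ex k φ ih => exact exists_congr fun w => ih _ (elim_extendMap f hf w)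
  | all k φ ih => exact forall_congr' fun w => ih _ (elim_extendMap f hf w)

end Relabel

section Star

variable {c : ℕ}

theorem realize_star {M : Type} (I : ∀ r : R, (Fin (ar r) → M) → Prop)
    (I' : ∀ r : Option R, (Fin (starAr ar c r) → M) → Prop) (cI : Fin c → M)
    (hI : ∀ r v, I' (some r) (Fin.append cI v) ↔ I r v) {n : ℕ} (ψ : Fml R (Fin c) ar n)
    (a : Fin n → M) : (star ψ).Realize I' cI a ↔ ψ.Realize I cI a := by
  induction ψ with
  | tru | fls => rfl
  | atom r args =>
    have hargs : (fun i => (Fin.addCases (motive := fun _ => _ ⊕ Fin c)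
          (fun j : Fin c => Sum.inr j) args i).elim a cI) =
        Fin.append cI fun i => (args i).elim a cI := by
      funext i
      induction i using Fin.addCases <;> simp
    exact (iff_of_eq (congrArg (I' (some r)) hargs)).trans (hI r _)
  | eq t₁ t₂ => rfl
  | not φ ih => exact not_congr (ih a)
  | and φ ψ ih₁ ih₂ => exact and_congr (ih₁ a) (ih₂ a)
  | or φ ψ ih₁ ih₂ => exact or_congr (ih₁ a) (ih₂ a)
  | ex k φ ih => exact exists_congr fun w => ih _
  | all k φ ih => exact forall_congr' fun w => ih _

theorem guard_covers_freeVars_relabel_star {C₂ : Type} {n m : ℕ} {r : R} {gargs : Fin (ar r) → Fin n ⊕ Fin c}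
    {φ : Fml R (Fin c) ar n} (hg : ∀ v ∈ φ.freeVars, ∃ i, gargs i = Sum.inl v)
    (f : Fin n ⊕ Fin c → Fin m ⊕ C₂) :
    ∀ v ∈ (relabel f (star φ)).freeVars,
      ∃ i, (f ∘ Fin.addCases (fun j : Fin c => Sum.inr j) gargs) i = Sum.inl v := by
  intro v hv
  obtain ⟨t, hft, ht⟩ := exists_of_mem_freeVars_relabel _ f hv
  rw [freeVars_star] at ht
  rcases t with w | j
  · obtain ⟨i, hi⟩ := hg w (ht w rfl)
    exact ⟨Fin.natAdd c i, by simp [hi, hft]⟩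
  · exact ⟨Fin.castAdd (ar r) j, by simp [hft]⟩

theorem isGF_relabel_star {C₂ : Type} {n : ℕ} {ψ : Fml R (Fin c) ar n} (hψ : IsGF ψ) {m : ℕ}
    (f : Fin n ⊕ Fin c → Fin m ⊕ C₂) : IsGF (relabel f (star ψ)) := by
  induction hψ generalizing m with
  | tru => exact .tru
  | fls => exact .fls
  | atom r args => exact .atom _ _
  | eq t₁ t₂ => exact .eq _ _
  | not _ ih => exact .not (ih f)
  | and _ _ ih₁ ih₂ => exact .and (ih₁ f) (ih₂ f)
  | or _ _ ih₁ ih₂ => exact .or (ih₁ f) (ih₂ f)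
  | ex r gargs _ hg ih => exact .ex (some r) _ (ih _) (guard_covers_freeVars_relabel_star hg _)
  | all r gargs _ hg ih => exact .all (some r) _ (ih _) (guard_covers_freeVars_relabel_star hg _)

theorem isGF_elimConsts {φ : Fml R (Fin c) ar 0} (hφ : IsGF φ) : IsGF (elimConsts φ) := by
  refine .ex none _ (isGF_relabel_star hφ _) fun v _ => ⟨Fin.cast (zero_add c) v, ?_⟩
  exact congrArg Sum.inl (Fin.ext (Nat.zero_add _))

theorem realize_elimConsts {M : Type} (φ : Fml R (Fin c) ar 0)
    (I' : ∀ r : Option R, (Fin (starAr ar c r) → M) → Prop) :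
    (elimConsts φ).Realize I' (fun e : Empty => e.elim) (fun i => i.elim0) ↔
      ∃ w : Fin c → M, I' none w ∧ (star φ).Realize I' w (fun i => i.elim0) := by
  refine exists_congr fun w => and_congr ?_ (realize_relabel I' _ _ ?_)
  · change I' none (fun i : Fin c => Fin.append (fun i => i.elim0) w (Fin.natAdd 0 i)) ↔ _
    simp only [Fin.append_right]
  · rintro (v | j)
    · exact v.elim0
    · simp

end Star

/-- For every GF sentence `φ` with constants `c₁,…,c_k`, the sentence `φ'`
(constant-free, over the extended schema) is in the guarded fragment and is
satisfiable if and only if `φ` is satisfiable. -/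
theorem gf_constant_elimination (c : ℕ) (φ : Fml R (Fin c) ar 0) (hφ : IsGF φ) :
    IsGF (elimConsts φ) ∧
    ((∃ (M : Type) (_ : Nonempty M) (interp : ∀ r : R, (Fin (ar r) → M) → Prop)
        (cI : Fin c → M), Fml.Realize interp cI φ (fun i => i.elim0)) ↔
      (∃ (M : Type) (_ : Nonempty M)
          (interp : ∀ r : Option R, (Fin (starAr ar c r) → M) → Prop),
        Fml.Realize interp (fun e : Empty => e.elim) (elimConsts φ)
          (fun i => i.elim0))) := by
  refine ⟨isGF_elimConsts hφ, ⟨?_, ?_⟩⟩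
  · rintro ⟨M, hM, I, cI, h⟩
    refine ⟨M, hM, fun
      | none => fun _ => True
      | some r => fun v => I r fun i => v (Fin.natAdd c i), ?_⟩
    exact (realize_elimConsts φ _).2 ⟨cI, trivial, (realize_star I _ cI (by simp) φ _).2 h⟩
  · rintro ⟨M, hM, I', h⟩
    obtain ⟨w, -, h⟩ := (realize_elimConsts φ I').1 h
    exact ⟨M, hM, fun r v => I' (some r) (Fin.append w v), w,
      (realize_star _ I' w (fun _ _ => Iff.rfl) φ _).1 h⟩

end Stmt9
end

section
/- Suppose an (EVOLVE) inference is performed on a non-full TGD τ = β(x⃗) → ∃y⃗ η(x⃗,y⃗) in head normal form and a full TGD τ' = β'(z⃗) → η'(z⃗) guarded by an atom G' ∈ β' (G' contains all variables of β'), using an mgu θ of head atoms H₁,…,Hₙ ∈ η with body atoms B₁',…,Bₙ' ∈ β' that is the identity on y⃗, where the existential variable check holds: every B' ∈ β' with vars(B'θ) ∩ y⃗ ≠ ∅ occurs among B₁',…,Bₙ', and x⃗θ ∩ y⃗ = ∅. Then G' occurs among B₁',…,Bₙ'. -/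
/-! In an (EVOLVE) inference, the guard of the full rule occurs among the
resolved body atoms. -/

namespace Stmt11

inductive FOTerm (V C F : Type) : Type where
  | var : V → FOTerm V C F
  | const : C → FOTerm V C F
  | func : F → List (FOTerm V C F) → FOTerm V C F

variable {V C F : Type}

def FOTerm.subst (σ : V → FOTerm V C F) : FOTerm V C F → FOTerm V C F
  | .var x => σ x
  | .const c => .const c
  | .func f ts => .func f (ts.attach.map fun ⟨t, _⟩ => t.subst σ)

/-- The variables occurring in a term. -/
def FOTerm.vars : FOTerm V C F → Set V
  | .var x => {x}
  | .const _ => ∅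
  | .func _ ts => ((ts.attach.map fun ⟨t, _⟩ => t.vars).foldr (· ∪ ·) ∅)

structure FOAtom (V C F R : Type) (ar : R → ℕ) where
  rel : R
  args : Fin (ar rel) → FOTerm V C F

variable {R : Type} {ar : R → ℕ}

def FOAtom.subst (σ : V → FOTerm V C F) (A : FOAtom V C F R ar) : FOAtom V C F R ar :=
  ⟨A.rel, fun i => (A.args i).subst σ⟩

def FOAtom.vars (A : FOAtom V C F R ar) : Set V := ⋃ i, (A.args i).vars

lemma foldr_union {α : Type*} (l : List (Set α)) :
    l.foldr (· ∪ ·) ∅ = ⋃ s ∈ l, s := by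
  induction l with
  | nil => simp
  | cons a t ih => simp [ih]

lemma vars_subst (θ : V → FOTerm V C F) :
    ∀ t : FOTerm V C F, (t.subst θ).vars = ⋃ x ∈ t.vars, (θ x).vars
  | .var x => by simp [FOTerm.subst, FOTerm.vars]
  | .const c => by simp [FOTerm.subst, FOTerm.vars]
  | .func f ts => by
    simp only [FOTerm.subst, FOTerm.vars, List.map_map]
    rw [foldr_union, foldr_union]
    ext y
    simp only [Set.mem_iUnion, List.mem_map, List.mem_attach, true_and, Subtype.exists,
      exists_prop, Function.comp]
    constructor
    · rintro ⟨s, ⟨t, ⟨t0, ht0, rfl⟩, rfl⟩, hy⟩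
      rw [vars_subst θ t0] at hy
      simp only [Set.mem_iUnion] at hy
      obtain ⟨x, hx, hy⟩ := hy
      exact ⟨x, ⟨t0.vars, ⟨t0, ht0, rfl⟩, hx⟩, hy⟩
    · rintro ⟨x, ⟨s, ⟨t, ht, rfl⟩, hx⟩, hy⟩
      refine ⟨(t.subst θ).vars, ⟨t.subst θ, ⟨t, ht, rfl⟩, rfl⟩, ?_⟩
      rw [vars_subst θ t]
      simp only [Set.mem_iUnion]
      exact ⟨x, hx, hy⟩

lemma atom_vars_subst (θ : V → FOTerm V C F) (A : FOAtom V C F R ar) :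
    (A.subst θ).vars = ⋃ x ∈ A.vars, (θ x).vars := by
  simp only [FOAtom.vars, FOAtom.subst, vars_subst]
  ext y
  simp only [Set.mem_iUnion]
  tauto


/-- Suppose an (EVOLVE) inference is performed on a non-full TGD
`τ = β(x⃗) → ∃y⃗ η(x⃗,y⃗)` in head normal form (every head atom contains an
existential variable from `Y`) and a full TGD `τ' = β'(z⃗) → η'(z⃗)` guarded by
`G' ∈ β'`, using an mgu `θ` of head atoms `H₁,…,Hₙ ∈ η` with body atoms
`B₁',…,Bₙ' ∈ β'` that is the identity on `Y`, where the existential variable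
check holds.  Then `G'` occurs among `B₁',…,Bₙ'`. -/
theorem evolve_guard_occurs {n : ℕ} (hn : 0 < n) (Y : Set V)
    (β η β' η' : List (FOAtom V C F R ar))
    (G' : FOAtom V C F R ar) (hG'mem : G' ∈ β')
    -- `G'` is a guard of `τ'`: it contains all variables of the body `β'`
    (hguard : ∀ B ∈ β', B.vars ⊆ G'.vars)
    -- `τ` is non-full and in head normal form: every head atom contains an
    -- existential variable
    (hHNF : ∀ H ∈ η, (H.vars ∩ Y).Nonempty)
    (H : Fin n → FOAtom V C F R ar) (B' : Fin n → FOAtom V C F R ar)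
    (hH : ∀ i, H i ∈ η) (hB' : ∀ i, B' i ∈ β')
    (θ : V → FOTerm V C F)
    -- `θ` unifies the selected atoms and is the identity on `y⃗`
    (hunif : ∀ i, (H i).subst θ = (B' i).subst θ)
    (hidY : ∀ y ∈ Y, θ y = FOTerm.var y)
    -- `θ` is most general among such unifiers
    (hmgu : ∀ σ : V → FOTerm V C F, (∀ i, (H i).subst σ = (B' i).subst σ) →
      ∃ δ : V → FOTerm V C F, ∀ x : V, (θ x).subst δ = σ x)
    -- existential variable check: any body atom of `τ'` whose `θ`-image
    -- contains a variable of `y⃗` occurs among the `Bᵢ'`, …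
    (hevc₁ : ∀ B ∈ β', ((B.subst θ).vars ∩ Y).Nonempty → ∃ i, B = B' i)
    -- … and `x⃗θ ∩ y⃗ = ∅`, where `x⃗` are the (universal) variables of `β`
    (hevc₂ : ∀ B ∈ β, ∀ x ∈ FOAtom.vars B, (θ x).vars ∩ Y = ∅) :
    ∃ i, G' = B' i := by
  -- pick the first resolved pair
  have i0 : Fin n := ⟨0, hn⟩
  obtain ⟨y, hyH, hyY⟩ := hHNF (H i0) (hH i0)
  -- y occurs in (H i0).subst θ since θ y = var y
  have hy1 : y ∈ ((H i0).subst θ).vars := by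
    rw [atom_vars_subst]
    simp only [Set.mem_iUnion]
    exact ⟨y, hyH, by rw [hidY y hyY]; simp [FOTerm.vars]⟩
  rw [hunif i0, atom_vars_subst] at hy1
  simp only [Set.mem_iUnion] at hy1
  obtain ⟨x, hxB, hyx⟩ := hy1
  have hxG : x ∈ G'.vars := hguard _ (hB' i0) hxB
  have hyG : y ∈ ((G'.subst θ).vars ∩ Y) := by
    constructor
    · rw [atom_vars_subst]
      simp only [Set.mem_iUnion]
      exact ⟨x, hxG, hyx⟩
    · exact hyY
  exact hevc₁ G' hG'mem ⟨y, hyG⟩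


end Stmt11
end

section
/- Every rule derived by the (EVOLVE) inference from a guarded TGD τ (in variable and head normal form, with body width ≤ w_b and head width ≤ w_h) and a guarded full TGD τ' (with the same bounds) is again a guarded TGD in head normal form whose body width is at most w_b and whose head width is at most w_h. In particular, the derived rule κ = β''→ ∃y⃗ η'' with β'' = (β ∪ (β' \ {B₁',…,Bₙ'}))θ and η'' = (η ∪ η')θ satisfies vars(β'') = vars(βθ), vars(η'') = vars(ηθ), and the guard of τ (instantiated by θ) guards κ. -/
/-!
An mgu of function-free atoms is function-free: collapsing every compound term to a variable
turns `θ` into another unifier, which is not an instance of `θ` if some `θ x` is compound. So `θ`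
sends variables to variables or constants, `vars(Aθ) = θ(vars A)`, and substitution never
increases the number of variables.

Head normal form puts an existential variable into `H₀θ = B₀'θ`, hence into `G'θ`, so the
existential variable check forces the guard to be resolved, `G' = Bⱼ'`. Every atom of `β'` and
`η'` then has its variables, after `θ`, among those of `G'θ = Hⱼθ`, i.e. in `vars(βθ) ∪ y⃗` and in
`vars(ηθ)`; those of the unresolved atoms of `β'` avoid `y⃗`, again by the check.
-/

namespace Stmt12

inductive FOTerm (V C F : Type) : Type where
  | var : V → FOTerm V C F
  | const : C → FOTerm V C F
  | func : F → List (FOTerm V C F) → FOTerm V C F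

variable {V C F : Type}

def FOTerm.subst (σ : V → FOTerm V C F) : FOTerm V C F → FOTerm V C F
  | .var x => σ x
  | .const c => .const c
  | .func f ts => .func f (ts.attach.map fun ⟨t, _⟩ => t.subst σ)

def FOTerm.vars : FOTerm V C F → Set V
  | .var x => {x}
  | .const _ => ∅
  | .func _ ts => ((ts.attach.map fun ⟨t, _⟩ => t.vars).foldr (· ∪ ·) ∅)

/-- A term is function-free when it is a variable or a constant. -/
def FOTerm.NoFunc : FOTerm V C F → Prop
  | .func _ _ => False
  | _ => True

structure FOAtom (V C F R : Type) (ar : R → ℕ) where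
  rel : R
  args : Fin (ar rel) → FOTerm V C F

variable {R : Type} {ar : R → ℕ}

def FOAtom.subst (σ : V → FOTerm V C F) (A : FOAtom V C F R ar) : FOAtom V C F R ar :=
  ⟨A.rel, fun i => (A.args i).subst σ⟩

def FOAtom.vars (A : FOAtom V C F R ar) : Set V := ⋃ i, (A.args i).vars

def FOAtom.NoFunc (A : FOAtom V C F R ar) : Prop := ∀ i, (A.args i).NoFunc

/-- The variables of a set of atoms. -/
def varsOf (S : Set (FOAtom V C F R ar)) : Set V := ⋃ A ∈ S, FOAtom.vars A

theorem ncard_biUnion_le_of_subsingleton {α β : Type*} {S : Set α} {T : α → Set β}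
    (hS : S.Finite) (hT : ∀ x ∈ S, (T x).Subsingleton) : (⋃ x ∈ S, T x).ncard ≤ S.ncard := by
  induction S, hS using Set.Finite.induction_on with
  | empty => simp
  | @insert a s ha hs ih =>
    rw [Set.biUnion_insert, Set.ncard_insert_of_notMem ha hs, add_comm]
    calc (T a ∪ ⋃ x ∈ s, T x).ncard ≤ (T a).ncard + (⋃ x ∈ s, T x).ncard := Set.ncard_union_le _ _
      _ ≤ 1 + s.ncard := by
        gcongr
        · have := (hT a (Set.mem_insert a s)).finite.to_subtype
          exact Set.ncard_le_one_iff_subsingleton.2 (hT a (Set.mem_insert a s))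
        · exact ih fun x hx => hT x (Set.mem_insert_of_mem a hx)

def substVars (θ : V → FOTerm V C F) (S : Set V) : Set V := ⋃ x ∈ S, (θ x).vars

section substVars

variable {θ : V → FOTerm V C F} {S T X Y : Set V}

theorem substVars_mono (h : S ⊆ T) : substVars θ S ⊆ substVars θ T :=
  Set.biUnion_subset_biUnion_left h

theorem mem_substVars_of_fixed {y : V} (hy : y ∈ S) (hθ : θ y = .var y) : y ∈ substVars θ S :=
  Set.mem_biUnion hy (by simp [hθ, FOTerm.vars])

theorem substVars_union_subset_of_fixed (hY : ∀ y ∈ Y, θ y = .var y) :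
    substVars θ (X ∪ Y) ⊆ substVars θ X ∪ Y := by
  rw [substVars, Set.biUnion_union]
  refine Set.union_subset_union_right _ (Set.iUnion₂_subset fun y hy => ?_)
  simp [hY y hy, FOTerm.vars, hy]

end substVars

namespace FOTerm

def collapseTo (x₀ : V) : FOTerm V C F → FOTerm V C F
  | .func _ _ => .var x₀
  | t => t

variable {θ : V → FOTerm V C F} {t : FOTerm V C F}

theorem NoFunc.vars_subst (h : t.NoFunc) (θ : V → FOTerm V C F) :
    (t.subst θ).vars = substVars θ t.vars := by
  cases t with
  | var x => simp [subst, vars, substVars]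
  | const c => simp [subst, vars, substVars]
  | func => exact h.elim

theorem NoFunc.vars_subsingleton (h : t.NoFunc) : t.vars.Subsingleton := by
  cases t with
  | var x => simp only [vars, Set.subsingleton_singleton]
  | const c => simp only [vars, Set.subsingleton_empty]
  | func => exact h.elim

theorem NoFunc.subst (hθ : ∀ x, (θ x).NoFunc) (h : t.NoFunc) : (t.subst θ).NoFunc := by
  cases t with
  | var x => simpa only [FOTerm.subst] using hθ x
  | const c => simp only [FOTerm.subst, NoFunc]
  | func => exact h.elim

theorem NoFunc.subst_collapseTo (x₀ : V) (h : t.NoFunc) :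
    t.subst (fun x => (θ x).collapseTo x₀) = (t.subst θ).collapseTo x₀ := by
  cases t with
  | var x => simp only [FOTerm.subst]
  | const c => simp only [FOTerm.subst, collapseTo]
  | func => exact h.elim

end FOTerm

theorem ncard_substVars_le {θ : V → FOTerm V C F} {S : Set V} (hθ : ∀ x, (θ x).NoFunc)
    (hS : S.Finite) : (substVars θ S).ncard ≤ S.ncard :=
  ncard_biUnion_le_of_subsingleton hS fun x _ => (hθ x).vars_subsingleton

namespace FOAtom

def mapArgs (c : FOTerm V C F → FOTerm V C F) (A : FOAtom V C F R ar) : FOAtom V C F R ar :=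
  ⟨A.rel, fun i => c (A.args i)⟩

variable {θ : V → FOTerm V C F} {A B : FOAtom V C F R ar}

theorem NoFunc.vars_subst (h : A.NoFunc) (θ : V → FOTerm V C F) :
    (A.subst θ).vars = substVars θ A.vars := by
  simp only [FOAtom.vars, FOAtom.subst, (h _).vars_subst, substVars, Set.biUnion_iUnion]

theorem NoFunc.finite_vars (h : A.NoFunc) : A.vars.Finite :=
  Set.finite_iUnion fun i => (h i).vars_subsingleton.finite

theorem NoFunc.subst (hθ : ∀ x, (θ x).NoFunc) (h : A.NoFunc) : (A.subst θ).NoFunc :=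
  fun i => (h i).subst hθ

theorem NoFunc.subst_collapseTo (x₀ : V) (h : A.NoFunc) :
    A.subst (fun x => (θ x).collapseTo x₀) = (A.subst θ).mapArgs (FOTerm.collapseTo x₀) := by
  simp only [FOAtom.subst, mapArgs]
  congr 1
  funext i
  exact (h i).subst_collapseTo x₀

theorem vars_subst_mono (hA : A.NoFunc) (hB : B.NoFunc) (h : A.vars ⊆ B.vars) :
    (A.subst θ).vars ⊆ (B.subst θ).vars := by
  rw [hA.vars_subst, hB.vars_subst]
  exact substVars_mono h

end FOAtom

section atomLists

variable {θ : V → FOTerm V C F} {L : List (FOAtom V C F R ar)}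

theorem biUnion_vars_subst (hL : ∀ A ∈ L, A.NoFunc) :
    ⋃ A ∈ L, (A.subst θ).vars = substVars θ (⋃ A ∈ L, A.vars) := by
  simp only [substVars, Set.biUnion_iUnion]
  exact Set.iUnion₂_congr fun A hA => (hL A hA).vars_subst θ

theorem finite_biUnion_vars (hL : ∀ A ∈ L, A.NoFunc) : (⋃ A ∈ L, A.vars).Finite :=
  L.finite_toSet.biUnion fun A hA => (hL A hA).finite_vars

theorem varsOf_setOf_subst (θ : V → FOTerm V C F) (L : List (FOAtom V C F R ar)) :
    varsOf {A | ∃ B ∈ L, A = B.subst θ} = ⋃ B ∈ L, (B.subst θ).vars := by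
  ext v
  simp [varsOf]

theorem varsOf_union_eq {S T : Set (FOAtom V C F R ar)} {X : Set V} (hS : varsOf S = X)
    (hT : ∀ A ∈ T, A.vars ⊆ X) : varsOf (S ∪ T) = X := by
  rw [varsOf, Set.biUnion_union, ← varsOf, hS]
  exact Set.union_eq_left.2 (Set.iUnion₂_subset hT)

end atomLists

def IsMGU {ι : Type*} (θ : V → FOTerm V C F) (H B' : ι → FOAtom V C F R ar) : Prop :=
  (∀ i, (H i).subst θ = (B' i).subst θ) ∧
    ∀ σ : V → FOTerm V C F, (∀ i, (H i).subst σ = (B' i).subst σ) →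
      ∃ δ : V → FOTerm V C F, ∀ x : V, (θ x).subst δ = σ x

theorem IsMGU.noFunc {ι : Type*} {θ : V → FOTerm V C F} {H B' : ι → FOAtom V C F R ar}
    (hθ : IsMGU θ H B') (hH : ∀ i, (H i).NoFunc) (hB' : ∀ i, (B' i).NoFunc) (x : V) :
    (θ x).NoFunc := by
  obtain ⟨δ, hδ⟩ := hθ.2 (fun z => (θ z).collapseTo x) fun i => by
    rw [(hH i).subst_collapseTo, hθ.1 i, (hB' i).subst_collapseTo]
  have hδx := hδ x
  cases hx : θ x with
  | func f ts => simp [hx, FOTerm.subst, FOTerm.collapseTo] at hδx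
  | _ => trivial

theorem varsOf_evolve_body {ι : Type*} {θ : V → FOTerm V C F} {Y : Set V}
    {β β' : List (FOAtom V C F R ar)} {B' : ι → FOAtom V C F R ar} (hβ : ∀ B ∈ β, B.NoFunc)
    (hβ' : ∀ B ∈ β', (B.subst θ).vars ⊆ substVars θ (⋃ B ∈ β, B.vars) ∪ Y)
    (hevc : ∀ B ∈ β', ((B.subst θ).vars ∩ Y).Nonempty → ∃ i, B = B' i) :
    varsOf ({A | ∃ B ∈ β, A = B.subst θ} ∪ {A | ∃ B ∈ β', (∀ i, B ≠ B' i) ∧ A = B.subst θ}) =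
      substVars θ (⋃ B ∈ β, B.vars) := by
  refine varsOf_union_eq (by rw [varsOf_setOf_subst, biUnion_vars_subst hβ]) ?_
  rintro _ ⟨B, hB, hne, rfl⟩ v hv
  refine (hβ' B hB hv).resolve_right fun hvY => ?_
  obtain ⟨i, rfl⟩ := hevc B hB ⟨v, hv, hvY⟩
  exact hne i rfl

theorem varsOf_evolve_head {θ : V → FOTerm V C F} {η η' : List (FOAtom V C F R ar)}
    (hη : ∀ D ∈ η, D.NoFunc) (hη' : ∀ D ∈ η', (D.subst θ).vars ⊆ substVars θ (⋃ D ∈ η, D.vars)) :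
    varsOf ({A | ∃ D ∈ η, A = D.subst θ} ∪ {A | ∃ D ∈ η', A = D.subst θ}) =
      substVars θ (⋃ D ∈ η, D.vars) :=
  varsOf_union_eq (by rw [varsOf_setOf_subst, biUnion_vars_subst hη]) fun _ ⟨D, hD, hA⟩ =>
    hA ▸ hη' D hD

theorem evolve_resolvent_properties_general {n : ℕ} (hn : 0 < n) (Y : Set V)
    (β η β' η' : List (FOAtom V C F R ar))
    -- all atoms are function-free
    (hff : ∀ A, (A ∈ β ∨ A ∈ η ∨ A ∈ β' ∨ A ∈ η') → A.NoFunc)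
    -- τ is a TGD: head variables occur in the body or among `y⃗`
    (hτvars : ∀ A ∈ η, A.vars ⊆ (⋃ B ∈ β, FOAtom.vars B) ∪ Y)
    -- `G` is a guard of `τ`, `G'` a guard of `τ'`
    (G : FOAtom V C F R ar) (hGmem : G ∈ β) (hG : ∀ B ∈ β, B.vars ⊆ G.vars)
    (G' : FOAtom V C F R ar) (hG'mem : G' ∈ β') (hG' : ∀ B ∈ β', B.vars ⊆ G'.vars)
    -- τ' is full: its head variables occur in its body
    (hfull : ∀ A ∈ η', A.vars ⊆ ⋃ B ∈ β', FOAtom.vars B)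
    -- τ is in head normal form: every head atom contains an existential variable
    (hHNF : ∀ H ∈ η, (H.vars ∩ Y).Nonempty)
    -- the resolved atoms
    (H : Fin n → FOAtom V C F R ar) (B' : Fin n → FOAtom V C F R ar)
    (hH : ∀ i, H i ∈ η) (hB' : ∀ i, B' i ∈ β')
    (θ : V → FOTerm V C F)
    -- θ is an mgu of the selected atoms that is the identity on `y⃗`
    (hunif : ∀ i, (H i).subst θ = (B' i).subst θ)
    (hidY : ∀ y ∈ Y, θ y = FOTerm.var y)
    (hmgu : ∀ σ : V → FOTerm V C F, (∀ i, (H i).subst σ = (B' i).subst σ) →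
      ∃ δ : V → FOTerm V C F, ∀ x : V, (θ x).subst δ = σ x)
    -- the existential variable check
    (hevc₁ : ∀ B ∈ β', ((B.subst θ).vars ∩ Y).Nonempty → ∃ i, B = B' i)
    -- width bounds on τ and τ'
    (wb wh : ℕ)
    (hwb : (⋃ B ∈ β, FOAtom.vars B).ncard ≤ wb)
    (hwh : (⋃ A ∈ η, FOAtom.vars A).ncard ≤ wh)
    -- the derived rule κ = β'' → ∃y⃗ η''
    (Bset Hset : Set (FOAtom V C F R ar))
    (hBset : Bset = {A | ∃ B ∈ β, A = B.subst θ} ∪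
      {A | ∃ B ∈ β', (∀ i, B ≠ B' i) ∧ A = B.subst θ})
    (hHset : Hset = {A | ∃ D ∈ η, A = D.subst θ} ∪ {A | ∃ D ∈ η', A = D.subst θ}) :
    -- conclusions
    varsOf Bset = ⋃ B ∈ β, ((B.subst θ).vars) ∧
    varsOf Hset = ⋃ D ∈ η, ((D.subst θ).vars) ∧
    (G.subst θ ∈ Bset ∧ varsOf Bset ⊆ (G.subst θ).vars) ∧
    varsOf Hset ⊆ varsOf Bset ∪ Y ∧
    (varsOf Bset).ncard ≤ wb ∧ (varsOf Hset).ncard ≤ wh ∧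
    (∀ A, (A ∈ Bset ∨ A ∈ Hset) → A.NoFunc) := by
  have hffβ : ∀ B ∈ β, B.NoFunc := fun B hB => hff B (.inl hB)
  have hffη : ∀ D ∈ η, D.NoFunc := fun D hD => hff D (.inr (.inl hD))
  have hffβ' : ∀ B ∈ β', B.NoFunc := fun B hB => hff B (.inr (.inr (.inl hB)))
  have hθ : ∀ x, (θ x).NoFunc :=
    IsMGU.noFunc ⟨hunif, hmgu⟩ (fun i => hffη _ (hH i)) (fun i => hffβ' _ (hB' i))
  obtain ⟨i₁, rfl⟩ : ∃ i, G' = B' i := by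
    have i₀ : Fin n := ⟨0, hn⟩
    obtain ⟨y, hyH, hyY⟩ := hHNF _ (hH i₀)
    refine hevc₁ G' hG'mem ⟨y, FOAtom.vars_subst_mono (hffβ' _ (hB' i₀)) (hffβ' G' hG'mem)
      (hG' _ (hB' i₀)) ?_, hyY⟩
    rw [← hunif, (hffη _ (hH i₀)).vars_subst]
    exact mem_substVars_of_fixed hyH (hidY y hyY)
  have hguarded : ∀ A : FOAtom V C F R ar, A.NoFunc → A.vars ⊆ (B' i₁).vars →
      (A.subst θ).vars ⊆ substVars θ (H i₁).vars := fun A hA hAG' => by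
    rw [← (hffη _ (hH i₁)).vars_subst, hunif]
    exact FOAtom.vars_subst_mono hA (hffβ' _ hG'mem) hAG'
  have hβ'θ : ∀ B ∈ β', (B.subst θ).vars ⊆ substVars θ (⋃ B ∈ β, B.vars) ∪ Y := fun B hB =>
    (hguarded B (hffβ' B hB) (hG' B hB)).trans
      ((substVars_mono (hτvars _ (hH i₁))).trans (substVars_union_subset_of_fixed hidY))
  have hη'θ : ∀ D ∈ η', (D.subst θ).vars ⊆ substVars θ (⋃ D ∈ η, D.vars) := fun D hD =>
    (hguarded D (hff D (by simp [hD])) ((hfull D hD).trans (Set.iUnion₂_subset hG'))).trans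
      (substVars_mono (Set.subset_biUnion_of_mem (hH i₁)))
  rw [biUnion_vars_subst hffβ, biUnion_vars_subst hffη]
  subst hBset hHset
  have hbody := varsOf_evolve_body hffβ hβ'θ hevc₁
  have hhead := varsOf_evolve_head hffη hη'θ
  refine ⟨hbody, hhead, ⟨.inl ⟨G, hGmem, rfl⟩, ?_⟩, ?_, ?_, ?_, ?_⟩
  · rw [hbody, (hffβ G hGmem).vars_subst]
    exact substVars_mono (Set.iUnion₂_subset hG)
  · rw [hbody, hhead]
    exact (substVars_mono (Set.iUnion₂_subset hτvars)).trans (substVars_union_subset_of_fixed hidY)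
  · exact hbody ▸ (ncard_substVars_le hθ (finite_biUnion_vars hffβ)).trans hwb
  · exact hhead ▸ (ncard_substVars_le hθ (finite_biUnion_vars hffη)).trans hwh
  · rintro _ ((⟨A, hA, rfl⟩ | ⟨A, hA, -, rfl⟩) | (⟨A, hA, rfl⟩ | ⟨A, hA, rfl⟩)) <;>
      exact (hff A (by simp [hA])).subst hθ

/-- Any rule `κ = β'' → ∃y⃗ η''` derived by an (EVOLVE) inference from a
guarded TGD `τ = β → ∃y⃗ η` (in head normal form, with guard `G`, body width
`≤ w_b` and head width `≤ w_h`) and a guarded full TGD `τ' = β' → η'` (with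
guard `G'`), where `β'' = (β ∪ (β' \ {B₁',…,Bₙ'}))θ` and `η'' = (η ∪ η')θ`, is
again a guarded function-free TGD with `vars(β'') = vars(βθ)`,
`vars(η'') = vars(ηθ)`, guard `Gθ`, body width `≤ w_b` and head width
`≤ w_h`. -/
theorem evolve_resolvent_properties {n : ℕ} (hn : 0 < n) (Y : Set V)
    (β η β' η' : List (FOAtom V C F R ar))
    -- all atoms are function-free
    (hff : ∀ A, (A ∈ β ∨ A ∈ η ∨ A ∈ β' ∨ A ∈ η') → A.NoFunc)
    -- τ is a TGD: head variables occur in the body or among `y⃗`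
    (hτvars : ∀ A ∈ η, A.vars ⊆ (⋃ B ∈ β, FOAtom.vars B) ∪ Y)
    -- the existential variables are disjoint from the body variables
    (hXY : Disjoint (⋃ B ∈ β, FOAtom.vars B) Y)
    -- τ and τ' use distinct variables
    (hdisj : Disjoint ((⋃ B ∈ β, FOAtom.vars B) ∪ Y) (⋃ B ∈ β', FOAtom.vars B))
    -- `G` is a guard of `τ`, `G'` a guard of `τ'`
    (G : FOAtom V C F R ar) (hGmem : G ∈ β) (hG : ∀ B ∈ β, B.vars ⊆ G.vars)
    (G' : FOAtom V C F R ar) (hG'mem : G' ∈ β') (hG' : ∀ B ∈ β', B.vars ⊆ G'.vars)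
    -- τ' is full: its head variables occur in its body
    (hfull : ∀ A ∈ η', A.vars ⊆ ⋃ B ∈ β', FOAtom.vars B)
    -- τ is in head normal form: every head atom contains an existential variable
    (hHNF : ∀ H ∈ η, (H.vars ∩ Y).Nonempty)
    -- the resolved atoms
    (H : Fin n → FOAtom V C F R ar) (B' : Fin n → FOAtom V C F R ar)
    (hH : ∀ i, H i ∈ η) (hB' : ∀ i, B' i ∈ β')
    (θ : V → FOTerm V C F)
    -- θ is an mgu of the selected atoms that is the identity on `y⃗`
    (hunif : ∀ i, (H i).subst θ = (B' i).subst θ)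
    (hidY : ∀ y ∈ Y, θ y = FOTerm.var y)
    (hmgu : ∀ σ : V → FOTerm V C F, (∀ i, (H i).subst σ = (B' i).subst σ) →
      ∃ δ : V → FOTerm V C F, ∀ x : V, (θ x).subst δ = σ x)
    -- the existential variable check
    (hevc₁ : ∀ B ∈ β', ((B.subst θ).vars ∩ Y).Nonempty → ∃ i, B = B' i)
    (hevc₂ : ∀ B ∈ β, ∀ x ∈ FOAtom.vars B, (θ x).vars ∩ Y = ∅)
    -- width bounds on τ and τ'
    (wb wh : ℕ)
    (hwb : (⋃ B ∈ β, FOAtom.vars B).ncard ≤ wb)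
    (hwh : (⋃ A ∈ η, FOAtom.vars A).ncard ≤ wh)
    (hwb' : (⋃ B ∈ β', FOAtom.vars B).ncard ≤ wb)
    (hwh' : (⋃ A ∈ η', FOAtom.vars A).ncard ≤ wh)
    -- the derived rule κ = β'' → ∃y⃗ η''
    (Bset Hset : Set (FOAtom V C F R ar))
    (hBset : Bset = {A | ∃ B ∈ β, A = B.subst θ} ∪
      {A | ∃ B ∈ β', (∀ i, B ≠ B' i) ∧ A = B.subst θ})
    (hHset : Hset = {A | ∃ D ∈ η, A = D.subst θ} ∪ {A | ∃ D ∈ η', A = D.subst θ}) :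
    -- conclusions
    varsOf Bset = ⋃ B ∈ β, ((B.subst θ).vars) ∧
    varsOf Hset = ⋃ D ∈ η, ((D.subst θ).vars) ∧
    (G.subst θ ∈ Bset ∧ varsOf Bset ⊆ (G.subst θ).vars) ∧
    varsOf Hset ⊆ varsOf Bset ∪ Y ∧
    (varsOf Bset).ncard ≤ wb ∧ (varsOf Hset).ncard ≤ wh ∧
    (∀ A, (A ∈ Bset ∨ A ∈ Hset) → A.NoFunc) :=
  evolve_resolvent_properties_general hn Y β η β' η' hff hτvars G hGmem hG G' hG'mem hG' hfull hHNF
    H B' hH hB' θ hunif hidY hmgu hevc₁ wb wh hwb hwh Bset Hset hBset hHset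

end Stmt12
end

section
/- Let H and B' be simple atoms over disjoint variable sets x⃗ and y⃗ respectively, where H is functional (contains at least one functional term) and every functional term in H contains all of x⃗, and either B' is function-free with vars(B') = y⃗, or B' is functional with every functional term containing all of y⃗. If θ is a most general unifier of H and B', then Hθ = B'θ is simple, and for each functional atom A ∈ {H, B'}, the θ-image of every variable of A is non-functional (a variable or constant). -/
/-!
Let `θ` unify `H` and `B'`, and let `S` be a set of variables. Replacing every outermost
subterm of the terms `θ v` that equals some `θ w` with `w ∈ S` by such a variable `w`
(`FOTerm.collapse`) gives a unifier that sends `S` to variables and constants, as long as `θ`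
sends no functional argument of `H` or `B'` to a term `θ w` with `w ∈ S`. If `θ` is most
general, it factors through this unifier, so `θ w` is not functional for `w ∈ S`.

The proviso holds for `S = X`, and for `S = X ∪ Y` when `B'` is functional, by comparing heights.
A functional argument `s` of `H` contains every `x ∈ X`, so `θ x` is strictly lower than `sθ`.
If `θ y = sθ` with `y ∈ Y`, then every `θ x` is lower than `θ y`, so each shallow argument of
`H` is sent at most to the height of `θ y`. The functional argument of `B'` that contains `y`
is sent strictly higher, yet it is unified with the argument of `H` at the same position.
The case with `H` and `B'` swapped is the same.
-/

namespace Stmt17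

inductive FOTerm (V C F : Type) : Type where
  | var : V → FOTerm V C F
  | const : C → FOTerm V C F
  | func : F → List (FOTerm V C F) → FOTerm V C F

variable {V C F : Type}

def FOTerm.subst (σ : V → FOTerm V C F) : FOTerm V C F → FOTerm V C F
  | .var x => σ x
  | .const c => .const c
  | .func f ts => .func f (ts.attach.map fun ⟨t, _⟩ => t.subst σ)

def FOTerm.vars : FOTerm V C F → Set V
  | .var x => {x}
  | .const _ => ∅
  | .func _ ts => ((ts.attach.map fun ⟨t, _⟩ => t.vars).foldr (· ∪ ·) ∅)

def FOTerm.NoFunc : FOTerm V C F → Prop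
  | .func _ _ => False
  | _ => True

def FOTerm.Functional (t : FOTerm V C F) : Prop := ¬ t.NoFunc

/-- A shallow term: no nested function applications. -/
def FOTerm.Shallow : FOTerm V C F → Prop
  | .func _ ts => ∀ t ∈ ts, t.NoFunc
  | _ => True

structure FOAtom (V C F R : Type) (ar : R → ℕ) where
  rel : R
  args : Fin (ar rel) → FOTerm V C F

variable {R : Type} {ar : R → ℕ}

def FOAtom.subst (σ : V → FOTerm V C F) (A : FOAtom V C F R ar) : FOAtom V C F R ar :=
  ⟨A.rel, fun i => (A.args i).subst σ⟩

def FOAtom.vars (A : FOAtom V C F R ar) : Set V := ⋃ i, (A.args i).vars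

def FOAtom.NoFunc (A : FOAtom V C F R ar) : Prop := ∀ i, (A.args i).NoFunc

/-- A simple atom: all its arguments are shallow. -/
def FOAtom.Simple (A : FOAtom V C F R ar) : Prop := ∀ i, (A.args i).Shallow

/-- A functional atom: some argument contains a function symbol. -/
def FOAtom.Functional (A : FOAtom V C F R ar) : Prop := ∃ i, (A.args i).Functional

namespace FOTerm

@[simp] theorem subst_var (σ : V → FOTerm V C F) (x : V) : (var x).subst σ = σ x := by
  simp [subst]

@[simp] theorem subst_const (σ : V → FOTerm V C F) (c : C) :
    (const c : FOTerm V C F).subst σ = const c := by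
  simp [subst]

@[simp] theorem subst_func (σ : V → FOTerm V C F) (f : F) (ts : List (FOTerm V C F)) :
    (func f ts).subst σ = func f (ts.map (subst σ)) := by
  simp [subst]

@[simp] theorem vars_var (x : V) : (var x : FOTerm V C F).vars = {x} := by simp [vars]

@[simp] theorem vars_const (c : C) : (const c : FOTerm V C F).vars = ∅ := by simp [vars]

theorem mem_vars_func {x : V} {f : F} {ts : List (FOTerm V C F)} :
    x ∈ (func f ts).vars ↔ ∃ t ∈ ts, x ∈ t.vars := by
  simp only [vars]
  induction ts with
  | nil => simp
  | cons t ts ih => simp_all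

theorem functional_func (f : F) (ts : List (FOTerm V C F)) : (func f ts).Functional :=
  fun h => h

theorem Functional.subst {t : FOTerm V C F} (ht : t.Functional) (θ : V → FOTerm V C F) :
    (t.subst θ).Functional := by
  cases t with
  | func f ts => rw [subst_func]; exact functional_func _ _
  | _ => exact absurd trivial ht

theorem NoFunc.subst {θ : V → FOTerm V C F} {t : FOTerm V C F} (ht : t.NoFunc)
    (hθ : ∀ x ∈ t.vars, (θ x).NoFunc) : (t.subst θ).NoFunc := by
  cases t with
  | var x => simpa using hθ x (by simp)
  | const c => simp [NoFunc]
  | func f ts => exact ht.elim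

theorem NoFunc.shallow {t : FOTerm V C F} (ht : t.NoFunc) : t.Shallow := by
  cases t <;> trivial

theorem Shallow.subst {θ : V → FOTerm V C F} {t : FOTerm V C F} (ht : t.Shallow)
    (hθ : ∀ x ∈ t.vars, (θ x).NoFunc) : (t.subst θ).Shallow := by
  cases t with
  | func f ts =>
    rw [subst_func]
    exact List.forall_mem_map.mpr fun u hu =>
      (ht u hu).subst fun x hx => hθ x (mem_vars_func.mpr ⟨u, hu, hx⟩)
  | _ => exact NoFunc.shallow (NoFunc.subst (by trivial) hθ)

def height : FOTerm V C F → ℕ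
  | .func _ ts => (ts.attach.map fun ⟨t, _⟩ => t.height).foldr max 0 + 1
  | _ => 0

theorem height_func (f : F) (ts : List (FOTerm V C F)) :
    (func f ts).height = (ts.map height).foldr max 0 + 1 := by
  simp [height]

theorem height_lt_height_func {f : F} {ts : List (FOTerm V C F)} {t : FOTerm V C F}
    (ht : t ∈ ts) : t.height < (func f ts).height := by
  rw [height_func, Nat.lt_succ_iff]
  exact List.le_max_of_le (List.mem_map_of_mem ht) le_rfl

theorem height_func_le {f : F} {ts : List (FOTerm V C F)} {n : ℕ}
    (h : ∀ t ∈ ts, t.height ≤ n) : (func f ts).height ≤ n + 1 := by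
  rw [height_func, Nat.add_le_add_iff_right]
  exact List.max_le_of_forall_le _ _ (by simpa using h)

theorem Functional.height_pos {t : FOTerm V C F} (ht : t.Functional) : 0 < t.height := by
  cases t with
  | func f ts => simp [height_func]
  | _ => exact absurd trivial ht

theorem height_le_height_subst (θ : V → FOTerm V C F) {x : V} :
    ∀ {t : FOTerm V C F}, x ∈ t.vars → (θ x).height ≤ (t.subst θ).height
  | .var y, h => by simp_all
  | .const _, h => by simp_all
  | .func f ts, h => by
    obtain ⟨t, ht, hx⟩ := mem_vars_func.mp h
    rw [subst_func]
    exact (height_le_height_subst θ hx).trans (height_lt_height_func (List.mem_map_of_mem ht)).le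

theorem height_lt_height_subst (θ : V → FOTerm V C F) {t : FOTerm V C F} (ht : t.Functional)
    {x : V} (hx : x ∈ t.vars) : (θ x).height < (t.subst θ).height := by
  cases t with
  | func f ts =>
    obtain ⟨u, hu, hxu⟩ := mem_vars_func.mp hx
    rw [subst_func]
    exact (height_le_height_subst θ hxu).trans_lt (height_lt_height_func (List.mem_map_of_mem hu))
  | _ => exact absurd trivial ht

theorem apply_ne_subst_of_mem_vars (θ : V → FOTerm V C F) {t : FOTerm V C F}
    (ht : t.Functional) {x : V} (hx : x ∈ t.vars) : θ x ≠ t.subst θ :=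
  fun h => (height_lt_height_subst θ ht hx).ne (congrArg height h)

theorem NoFunc.height_subst_le {θ : V → FOTerm V C F} {t : FOTerm V C F} (ht : t.NoFunc)
    {n : ℕ} (hθ : ∀ x ∈ t.vars, (θ x).height ≤ n) : (t.subst θ).height ≤ n := by
  cases t with
  | var x => simpa using hθ x (by simp)
  | const c => simp [height]
  | func f ts => exact ht.elim

theorem Shallow.height_subst_le {θ : V → FOTerm V C F} {t : FOTerm V C F} (ht : t.Shallow)
    {n : ℕ} (hθ : ∀ x ∈ t.vars, (θ x).height ≤ n) : (t.subst θ).height ≤ n + 1 := by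
  cases t with
  | func f ts =>
    rw [subst_func]
    refine height_func_le (List.forall_mem_map.mpr fun u hu => ?_)
    exact (ht u hu).height_subst_le fun x hx => hθ x (mem_vars_func.mpr ⟨u, hu, hx⟩)
  | _ => exact (NoFunc.height_subst_le (by trivial) hθ).trans n.le_succ

theorem apply_ne_subst_of_subst_eq_subst {X : Set V} {θ : V → FOTerm V C F}
    {s t u : FOTerm V C F} {w : V} (hs : s.Functional) (hXs : X ⊆ s.vars)
    (ht : t.Shallow) (htX : t.vars ⊆ X) (hu : u.Functional) (hw : w ∈ u.vars)
    (htu : t.subst θ = u.subst θ) : θ w ≠ s.subst θ := by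
  intro hws
  have hpos : 0 < (θ w).height := hws ▸ (hs.subst θ).height_pos
  have hX : ∀ x ∈ X, (θ x).height < (θ w).height :=
    fun x hx => hws ▸ height_lt_height_subst θ hs (hXs hx)
  have hle : (t.subst θ).height ≤ (θ w).height - 1 + 1 :=
    ht.height_subst_le fun x hx => Nat.le_sub_one_of_lt (hX x (htX hx))
  have hlt : (θ w).height < (u.subst θ).height := height_lt_height_subst θ hu hw
  rw [htu] at hle
  omega

theorem apply_ne_subst_of_mem_union {ι : Type*} {X Y : Set V} {θ : V → FOTerm V C F}
    {a b : ι → FOTerm V C F} (ha : ∀ i, (a i).Shallow) (haX : ∀ i, (a i).vars ⊆ X)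
    (hXa : ∀ i, (a i).Functional → X ⊆ (a i).vars)
    (hYb : ∀ i, (b i).Functional → Y ⊆ (b i).vars) (hb : ∃ j, (b j).Functional)
    (hab : ∀ i, (a i).subst θ = (b i).subst θ) {i : ι} (hi : (a i).Functional)
    {w : V} (hw : w ∈ X ∪ Y) : θ w ≠ (a i).subst θ := by
  rcases hw with hw | hw
  · exact apply_ne_subst_of_mem_vars θ hi (hXa i hi hw)
  · obtain ⟨j, hj⟩ := hb
    exact apply_ne_subst_of_subst_eq_subst hi (hXa i hi) (ha j) (haX j) hj (hYb j hj hw) (hab j)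

open Classical in
noncomputable def collapse (S : Set V) (θ : V → FOTerm V C F) : FOTerm V C F → FOTerm V C F
  | .func f ts =>
      if h : ∃ w ∈ S, θ w = .func f ts then .var h.choose
      else .func f (ts.attach.map fun ⟨t, _⟩ => t.collapse S θ)
  | t => t

theorem noFunc_collapse_apply {S : Set V} (θ : V → FOTerm V C F) {v : V} (hv : v ∈ S) :
    ((θ v).collapse S θ).NoFunc := by
  cases h : θ v with
  | func f ts => rw [collapse, dif_pos ⟨v, hv, h⟩]; trivial
  | _ => simp [collapse, NoFunc]

theorem NoFunc.collapse_subst {S : Set V} {θ : V → FOTerm V C F} {t : FOTerm V C F}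
    (ht : t.NoFunc) : (t.subst θ).collapse S θ = t.subst fun v => (θ v).collapse S θ := by
  cases t with
  | var x => simp
  | const c => simp [collapse]
  | func f ts => exact ht.elim

theorem Shallow.collapse_subst {S : Set V} {θ : V → FOTerm V C F} {t : FOTerm V C F}
    (ht : t.Shallow) (hS : t.Functional → ∀ w ∈ S, θ w ≠ t.subst θ) :
    (t.subst θ).collapse S θ = t.subst fun v => (θ v).collapse S θ := by
  cases t with
  | func f ts =>
    rw [subst_func, subst_func, collapse, dif_neg]
    · simp only [List.map_attach_eq_pmap, List.pmap_eq_map, List.map_map, func.injEq, true_and]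
      exact List.map_congr_left fun u hu => (ht u hu).collapse_subst
    · rintro ⟨w, hw, hθw⟩
      exact hS (functional_func f ts) w hw (by rw [hθw, subst_func])
  | _ => exact NoFunc.collapse_subst (by trivial)

theorem noFunc_of_mgu {ι : Type*} {θ : V → FOTerm V C F} {a b : ι → FOTerm V C F}
    (ha : ∀ i, (a i).Shallow) (hb : ∀ i, (b i).Shallow)
    (hab : ∀ i, (a i).subst θ = (b i).subst θ)
    (hmgu : ∀ σ : V → FOTerm V C F, (∀ i, (a i).subst σ = (b i).subst σ) →
      ∃ δ : V → FOTerm V C F, ∀ x, (θ x).subst δ = σ x)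
    {S : Set V} (haS : ∀ i, (a i).Functional → ∀ w ∈ S, θ w ≠ (a i).subst θ)
    (hbS : ∀ i, (b i).Functional → ∀ w ∈ S, θ w ≠ (b i).subst θ) :
    ∀ v ∈ S, (θ v).NoFunc := by
  intro v hv
  obtain ⟨δ, hδ⟩ := hmgu (fun v => (θ v).collapse S θ) fun i => by
    rw [← (ha i).collapse_subst (haS i), ← (hb i).collapse_subst (hbS i), hab i]
  by_contra hθv
  exact Functional.subst hθv δ (hδ v ▸ noFunc_collapse_apply θ hv)

end FOTerm

namespace FOAtom

theorem mk_subst_eq_mk_subst_iff {θ : V → FOTerm V C F} {r : R}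
    {a b : Fin (ar r) → FOTerm V C F} :
    (FOAtom.mk r a).subst θ = (FOAtom.mk r b).subst θ ↔ ∀ i, (a i).subst θ = (b i).subst θ := by
  simp [FOAtom.subst, funext_iff]

theorem vars_args_subset (A : FOAtom V C F R ar) (i : Fin (ar A.rel)) :
    (A.args i).vars ⊆ A.vars :=
  Set.subset_iUnion (fun i => (A.args i).vars) i

theorem Simple.subst {θ : V → FOTerm V C F} {A : FOAtom V C F R ar} (hA : A.Simple)
    (hθ : ∀ v ∈ A.vars, (θ v).NoFunc) : (A.subst θ).Simple :=
  fun i => (hA i).subst fun v hv => hθ v (A.vars_args_subset i hv)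

end FOAtom

open FOTerm

theorem mgu_simple_atoms_general (X Y : Set V)
    (H B' : FOAtom V C F R ar)
    (hHX : H.vars ⊆ X) (hB'Y : B'.vars ⊆ Y)
    (hHsimple : H.Simple) (hB'simple : B'.Simple)
    (hHfunc : H.Functional)
    (hHall : ∀ i, (H.args i).Functional → X ⊆ (H.args i).vars)
    (hB' : (B'.NoFunc ∧ B'.vars = Y) ∨
      (B'.Functional ∧ ∀ i, (B'.args i).Functional → Y ⊆ (B'.args i).vars))
    (θ : V → FOTerm V C F)
    (hunif : H.subst θ = B'.subst θ)
    (hmgu : ∀ σ : V → FOTerm V C F, H.subst σ = B'.subst σ →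
      ∃ δ : V → FOTerm V C F, ∀ x : V, (θ x).subst δ = σ x) :
    (H.subst θ).Simple ∧ (B'.subst θ).Simple ∧
    (∀ A : FOAtom V C F R ar, (A = H ∨ A = B') → A.Functional →
      ∀ v ∈ A.vars, (θ v).NoFunc) := by
  obtain ⟨r, a⟩ := H
  obtain ⟨r', b⟩ := B'
  obtain rfl : r = r' := congrArg FOAtom.rel hunif
  have hab := FOAtom.mk_subst_eq_mk_subst_iff.mp hunif
  simp only [FOAtom.mk_subst_eq_mk_subst_iff] at hmgu
  have haX i : (a i).vars ⊆ X := (FOAtom.vars_args_subset _ i).trans hHX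
  have hbY i : (b i).vars ⊆ Y := (FOAtom.vars_args_subset _ i).trans hB'Y
  obtain ⟨hX, hY⟩ : (∀ v ∈ X, (θ v).NoFunc) ∧
      (FOAtom.Functional ⟨r, b⟩ → ∀ v ∈ Y, (θ v).NoFunc) := by
    rcases hB' with ⟨hb, -⟩ | ⟨hb, hYb⟩
    · refine ⟨noFunc_of_mgu hHsimple hB'simple hab hmgu ?_ ?_, fun ⟨i, hi⟩ => absurd (hb i) hi⟩
      · exact fun i hi w hw => apply_ne_subst_of_mem_vars θ hi (hHall i hi hw)
      · exact fun i hi => absurd (hb i) hi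
    · have hXY := noFunc_of_mgu (S := X ∪ Y) hHsimple hB'simple hab hmgu
        (fun i hi _ hw => apply_ne_subst_of_mem_union hHsimple haX hHall hYb hb hab hi hw)
        (fun i hi _ hw => apply_ne_subst_of_mem_union hB'simple hbY hYb hHall hHfunc
          (fun i => (hab i).symm) hi (Set.union_comm X Y ▸ hw))
      exact ⟨fun v hv => hXY v (.inl hv), fun _ v hv => hXY v (.inr hv)⟩
  have hsimple := hHsimple.subst fun v hv => hX v (hHX hv)
  refine ⟨hsimple, hunif ▸ hsimple, ?_⟩
  rintro A (rfl | rfl) hA v hv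
  · exact hX v (hHX hv)
  · exact hY hA v (hB'Y hv)

/-- Let `H` and `B'` be simple atoms over disjoint variable sets `X` and `Y`,
`H` functional with every functional term containing all of `X`, and `B'`
either function-free with `vars B' = Y` or functional with every functional
term containing all of `Y`.  If `θ` is an mgu of `H` and `B'`, then
`Hθ = B'θ` is simple, and the `θ`-image of every variable of a functional
atom among `H`, `B'` is non-functional. -/
theorem mgu_simple_atoms (X Y : Set V) (hXY : Disjoint X Y)
    (H B' : FOAtom V C F R ar)
    (hHX : H.vars ⊆ X) (hB'Y : B'.vars ⊆ Y)
    (hHsimple : H.Simple) (hB'simple : B'.Simple)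
    (hHfunc : H.Functional)
    (hHall : ∀ i, (H.args i).Functional → X ⊆ (H.args i).vars)
    (hB' : (B'.NoFunc ∧ B'.vars = Y) ∨
      (B'.Functional ∧ ∀ i, (B'.args i).Functional → Y ⊆ (B'.args i).vars))
    (θ : V → FOTerm V C F)
    (hunif : H.subst θ = B'.subst θ)
    (hmgu : ∀ σ : V → FOTerm V C F, H.subst σ = B'.subst σ →
      ∃ δ : V → FOTerm V C F, ∀ x : V, (θ x).subst δ = σ x) :
    (H.subst θ).Simple ∧ (B'.subst θ).Simple ∧
    (∀ A : FOAtom V C F R ar, (A = H ∨ A = B') → A.Functional →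
      ∀ v ∈ A.vars, (θ v).NoFunc) :=
  mgu_simple_atoms_general X Y H B' hHX hB'Y hHsimple hB'simple hHfunc hHall hB' θ hunif hmgu

end Stmt17
end
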